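/- arXiv:2602.01529 — 2 statements merged into one kernel-verified Lean document; each statement's English description precedes it below -/
import Mathlib

section
/- Let ψ : ℝ^m → ℝ be defined by ψ(z) = ∫₀^{|z|} ω(t) dt with ω(t) = (a−b)e^{−βt} + b where a > b > 0, β > 0. Then ψ is Lipschitz continuous with Lipschitz constant a, and for all z₁, z₂ ∈ ℝ^m, ψ⁰(z₁; z₂−z₁) + ψ⁰(z₂; z₁−z₂) ≤ β(a−b)|z₁−z₂|². -/
/-!
Write `ψ z = Φ ‖z‖` with `Φ' = ω`. Since `0 ≤ ω ≤ ω 0 = a` on `[0, ∞)`, `ψ` is `a`-Lipschitz,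
which bounds `ψ⁰(0; v)` by `a ‖v‖`. Away from the origin `ψ` is strictly differentiable with
gradient `ω ‖z‖ / ‖z‖ • z`, so there `ψ⁰` is the ordinary directional derivative. For
`z₁, z₂ ≠ 0`, Cauchy–Schwarz bounds the sum by `(ω ‖z₂‖ - ω ‖z₁‖) (‖z₁‖ - ‖z₂‖)`, and `ω` is
`β (a - b)`-Lipschitz on `[0, ∞)`; when one point is the origin the same bound applies with
`ω 0 = a` in place of the missing gradient.
-/

open Filter

/-- The Clarke generalized directional derivative of `ψ` at `u` in the direction `v`. -/
noncomputable def clarkeDeriv {V : Type*} [NormedAddCommGroup V] [NormedSpace ℝ V]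
    (ψ : V → ℝ) (u v : V) : ℝ :=
  limsup (fun p : V × ℝ => (ψ (p.1 + p.2 • v) - ψ p.1) / p.2)
    ((nhds u) ×ˢ (nhdsWithin (0 : ℝ) (Set.Ioi 0)))

open Asymptotics Set Topology
open scoped NNReal InnerProductSpace

lemma eventually_pos_snd_nhds_prod_nhdsGT {X : Type*} [TopologicalSpace X] (u : X) :
    ∀ᶠ p : X × ℝ in 𝓝 u ×ˢ 𝓝[>] 0, 0 < p.2 :=
  Eventually.prod_inr self_mem_nhdsWithin _

section Clarke

variable {V : Type*} [NormedAddCommGroup V] [NormedSpace ℝ V]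

theorem LipschitzWith.clarkeDeriv_le {f : V → ℝ} {K : ℝ≥0} (hf : LipschitzWith K f)
    (u v : V) : clarkeDeriv f u v ≤ K * ‖v‖ := by
  have hq : ∀ᶠ p : V × ℝ in 𝓝 u ×ˢ 𝓝[>] 0,
      |(f (p.1 + p.2 • v) - f p.1) / p.2| ≤ K * ‖v‖ := by
    filter_upwards [eventually_pos_snd_nhds_prod_nhdsGT u] with p hp
    have h := hf.dist_le_mul (p.1 + p.2 • v) p.1
    rw [dist_eq_norm, dist_eq_norm, add_sub_cancel_left, norm_smul, Real.norm_of_nonneg hp.le,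
      Real.norm_eq_abs] at h
    rw [abs_div, abs_of_pos hp, div_le_iff₀ hp]
    linarith
  exact limsup_le_of_le
    (IsBoundedUnder.isCoboundedUnder_le ⟨_, eventually_map.2 (hq.mono fun _ h => (abs_le.1 h).1)⟩)
    (hq.mono fun _ h => (abs_le.1 h).2)

theorem HasStrictFDerivAt.tendsto_clarke_quotient {f : V → ℝ} {f' : V →L[ℝ] ℝ} {u : V}
    (hf : HasStrictFDerivAt f f' u) (v : V) :
    Tendsto (fun p : V × ℝ => (f (p.1 + p.2 • v) - f p.1) / p.2) (𝓝 u ×ˢ 𝓝[>] 0)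
      (𝓝 (f' v)) := by
  have hpair : Tendsto (fun p : V × ℝ => (p.1 + p.2 • v, p.1)) (𝓝 u ×ˢ 𝓝[>] 0) (𝓝 (u, u)) := by
    have : Tendsto (fun p : V × ℝ => (p.1 + p.2 • v, p.1)) (𝓝 (u, 0)) (𝓝 (u, u)) := by
      simpa using (by fun_prop : Continuous fun p : V × ℝ => (p.1 + p.2 • v, p.1)).tendsto (u, 0)
    refine this.mono_left ?_
    rw [nhds_prod_eq]
    exact prod_mono le_rfl nhdsWithin_le_nhds
  have hsmall : (fun p : V × ℝ => f (p.1 + p.2 • v) - f p.1 - p.2 * f' v) =o[𝓝 u ×ˢ 𝓝[>] 0]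
      fun p => p.2 := by
    have h := hf.isLittleO.comp_tendsto hpair
    simp only [Function.comp_def, add_sub_cancel_left, map_smul, smul_eq_mul] at h
    exact h.trans_isBigO (isBigO_of_le' _ fun p => by rw [norm_smul, mul_comm])
  refine (hsmall.tendsto_div_nhds_zero.add_const (f' v)).congr' ?_ |>.trans (by rw [zero_add])
  filter_upwards [eventually_pos_snd_nhds_prod_nhdsGT u] with p hp
  field_simp
  ring

theorem HasStrictFDerivAt.clarkeDeriv_eq {f : V → ℝ} {f' : V →L[ℝ] ℝ} {u : V}
    (hf : HasStrictFDerivAt f f' u) (v : V) : clarkeDeriv f u v = f' v :=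
  (hf.tendsto_clarke_quotient v).limsup_eq

end Clarke

noncomputable def radialPotential {E : Type*} [Norm E] (ω : ℝ → ℝ) (z : E) : ℝ :=
  ∫ t in (0 : ℝ)..‖z‖, ω t

theorem lipschitzWith_radialPotential {E : Type*} [SeminormedAddCommGroup E] {ω : ℝ → ℝ}
    (hω : Continuous ω) {K : ℝ≥0} (hK : ∀ t, 0 ≤ t → |ω t| ≤ K) :
    LipschitzWith K (radialPotential ω : E → ℝ) := by
  refine LipschitzWith.of_dist_le_mul fun x y => ?_
  have hbound : ‖∫ t in ‖y‖..‖x‖, ω t‖ ≤ K * |‖x‖ - ‖y‖| := by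
    refine intervalIntegral.norm_integral_le_of_norm_le_const fun t ht => hK t ?_
    rcases Set.mem_uIoc.1 ht with h | h
    · exact (norm_nonneg y).trans h.1.le
    · exact (norm_nonneg x).trans h.1.le
  calc dist (radialPotential ω x) (radialPotential ω y)
      = ‖∫ t in ‖y‖..‖x‖, ω t‖ := by
        rw [radialPotential, radialPotential, dist_eq_norm,
          intervalIntegral.integral_interval_sub_left (hω.intervalIntegrable _ _)
            (hω.intervalIntegrable _ _)]
    _ ≤ K * |‖x‖ - ‖y‖| := hbound
    _ ≤ K * dist x y := by
        rw [dist_eq_norm]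
        exact mul_le_mul_of_nonneg_left (abs_norm_sub_norm_le x y) K.2

section Radial

variable {E : Type*} [NormedAddCommGroup E] [InnerProductSpace ℝ E]

theorem hasStrictFDerivAt_norm_of_ne_zero {z : E} (hz : z ≠ 0) :
    HasStrictFDerivAt (‖·‖) (‖z‖⁻¹ • innerSL ℝ z) z := by
  have h := (hasStrictFDerivAt_norm_sq z).sqrt (by simpa using hz)
  simp only [Real.sqrt_sq (norm_nonneg _)] at h
  convert h using 1
  ext v
  simp
  field_simp

variable {ω : ℝ → ℝ}

theorem hasStrictFDerivAt_radialPotential (hω : Continuous ω) {z : E} (hz : z ≠ 0) :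
    HasStrictFDerivAt (radialPotential ω) (ω ‖z‖ • ‖z‖⁻¹ • innerSL ℝ z) z :=
  (hω.integral_hasStrictDerivAt 0 ‖z‖).comp_hasStrictFDerivAt z
    (hasStrictFDerivAt_norm_of_ne_zero hz)

theorem clarkeDeriv_radialPotential (hω : Continuous ω) {z : E} (hz : z ≠ 0) (v : E) :
    clarkeDeriv (radialPotential ω) z v = ω ‖z‖ / ‖z‖ * ⟪z, v⟫_ℝ := by
  rw [(hasStrictFDerivAt_radialPotential hω hz).clarkeDeriv_eq]
  simp [div_eq_mul_inv, mul_assoc]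

theorem inner_radial_add_inner_radial_le {p q : ℝ} (hp : 0 ≤ p) (hq : 0 ≤ q) {z₁ z₂ : E}
    (h₁ : z₁ ≠ 0) (h₂ : z₂ ≠ 0) :
    p / ‖z₁‖ * ⟪z₁, z₂ - z₁⟫_ℝ + q / ‖z₂‖ * ⟪z₂, z₁ - z₂⟫_ℝ ≤ (q - p) * (‖z₁‖ - ‖z₂‖) := by
  have hr₁ : 0 < ‖z₁‖ := norm_pos_iff.2 h₁
  have hr₂ : 0 < ‖z₂‖ := norm_pos_iff.2 h₂
  have hcs : (p / ‖z₁‖ + q / ‖z₂‖) * ⟪z₁, z₂⟫_ℝ ≤ (p / ‖z₁‖ + q / ‖z₂‖) * (‖z₁‖ * ‖z₂‖) :=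
    mul_le_mul_of_nonneg_left (real_inner_le_norm z₁ z₂) (by positivity)
  rw [inner_sub_right, inner_sub_right, real_inner_self_eq_norm_sq, real_inner_self_eq_norm_sq,
    real_inner_comm z₁ z₂]
  field_simp at hcs ⊢
  linarith

variable (hω : Continuous ω) (hω_nonneg : ∀ t, 0 ≤ t → 0 ≤ ω t)
  (hω_le : ∀ t, 0 ≤ t → ω t ≤ ω 0)
include hω hω_nonneg hω_le

theorem clarkeDeriv_radialPotential_zero_le (v : E) :
    clarkeDeriv (radialPotential ω) 0 v ≤ ω 0 * ‖v‖ := by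
  have hω₀ : ((ω 0).toNNReal : ℝ) = ω 0 := Real.coe_toNNReal _ (hω_nonneg 0 le_rfl)
  have hK : ∀ t, 0 ≤ t → |ω t| ≤ (ω 0).toNNReal := fun t ht => by
    rw [abs_of_nonneg (hω_nonneg t ht), hω₀]
    exact hω_le t ht
  simpa only [hω₀] using (lipschitzWith_radialPotential (E := E) hω hK).clarkeDeriv_le 0 v

theorem clarkeDeriv_radialPotential_neg_self_le (z : E) :
    clarkeDeriv (radialPotential ω) z (-z) ≤ -(ω ‖z‖ * ‖z‖) := by
  rcases eq_or_ne z 0 with rfl | hz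
  · simpa using clarkeDeriv_radialPotential_zero_le hω hω_nonneg hω_le (0 : E)
  · rw [clarkeDeriv_radialPotential hω hz, inner_neg_right, real_inner_self_eq_norm_sq]
    exact le_of_eq (by field_simp)

theorem clarkeDeriv_radialPotential_add_le {L : ℝ≥0} (hL : LipschitzOnWith L ω (Ici 0))
    (z₁ z₂ : E) :
    clarkeDeriv (radialPotential ω) z₁ (z₂ - z₁) + clarkeDeriv (radialPotential ω) z₂ (z₁ - z₂)
      ≤ L * ‖z₁ - z₂‖ ^ 2 := by
  have hωL : ∀ r s, 0 ≤ r → 0 ≤ s → (ω s - ω r) * (r - s) ≤ L * (r - s) ^ 2 := by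
    intro r s hr hs
    have h := hL.dist_le_mul s (mem_Ici.2 hs) r (mem_Ici.2 hr)
    rw [Real.dist_eq, Real.dist_eq, abs_sub_comm s r] at h
    calc (ω s - ω r) * (r - s) ≤ |ω s - ω r| * |r - s| := by
          rw [← abs_mul]; exact le_abs_self _
      _ ≤ L * |r - s| * |r - s| := by gcongr
      _ = L * (r - s) ^ 2 := by rw [mul_assoc, abs_mul_abs_self, sq]
  have hzero : ∀ z : E, clarkeDeriv (radialPotential ω) 0 (z - 0)
      + clarkeDeriv (radialPotential ω) z (0 - z) ≤ L * ‖0 - z‖ ^ 2 := by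
    intro z
    have h₀ := clarkeDeriv_radialPotential_zero_le hω hω_nonneg hω_le z
    have hz := clarkeDeriv_radialPotential_neg_self_le hω hω_nonneg hω_le z
    have := hωL 0 ‖z‖ le_rfl (norm_nonneg z)
    rw [sub_zero, zero_sub, norm_neg]
    nlinarith
  rcases eq_or_ne z₁ 0 with rfl | h₁
  · exact hzero z₂
  rcases eq_or_ne z₂ 0 with rfl | h₂
  · rw [add_comm, norm_sub_rev]
    exact hzero z₁
  have hnorm : (‖z₁‖ - ‖z₂‖) ^ 2 ≤ ‖z₁ - z₂‖ ^ 2 :=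
    sq_le_sq' (abs_le.1 (abs_norm_sub_norm_le z₁ z₂)).1 (abs_le.1 (abs_norm_sub_norm_le z₁ z₂)).2
  rw [clarkeDeriv_radialPotential hω h₁, clarkeDeriv_radialPotential hω h₂]
  calc _ ≤ (ω ‖z₂‖ - ω ‖z₁‖) * (‖z₁‖ - ‖z₂‖) :=
        inner_radial_add_inner_radial_le (hω_nonneg _ (norm_nonneg _))
          (hω_nonneg _ (norm_nonneg _)) h₁ h₂
    _ ≤ L * (‖z₁‖ - ‖z₂‖) ^ 2 := hωL _ _ (norm_nonneg _) (norm_nonneg _)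
    _ ≤ L * ‖z₁ - z₂‖ ^ 2 := by gcongr

end Radial

theorem lipschitzOnWith_mul_exp_neg_add {c β : ℝ} (hc : 0 ≤ c) (hβ : 0 ≤ β) (b : ℝ) :
    LipschitzOnWith (β * c).toNNReal (fun t => c * Real.exp (-β * t) + b) (Ici 0) := by
  refine (convex_Ici 0).lipschitzOnWith_of_nnnorm_hasDerivWithin_le
    (f' := fun t => c * (Real.exp (-β * t) * (-β * 1))) (fun t _ => ?_) fun t ht => ?_
  · exact ((((hasDerivAt_id t).const_mul (-β)).exp.const_mul c).add_const b).hasDerivWithinAt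
  · have hexp : Real.exp (-β * t) ≤ 1 := Real.exp_le_one_iff.2 (by nlinarith [mem_Ici.1 ht])
    rw [← NNReal.coe_le_coe, coe_nnnorm, Real.coe_toNNReal _ (by positivity), Real.norm_eq_abs,
      abs_le]
    have hβc : 0 ≤ β * c := mul_nonneg hβ hc
    constructor <;> nlinarith [mul_le_mul_of_nonneg_left hexp hβc,
      mul_nonneg hβc (Real.exp_pos (-β * t)).le]

/-- For `ψ(z) = ∫₀^{|z|} ω(t) dt` with `ω(t) = (a−b)e^{−βt} + b`, `a > b > 0`, `β > 0`,
`ψ` is Lipschitz with constant `a` and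
`ψ⁰(z₁; z₂−z₁) + ψ⁰(z₂; z₁−z₂) ≤ β(a−b)|z₁−z₂|²` for all `z₁, z₂ ∈ ℝ^m`. -/
theorem friction_potential_properties
    (m : ℕ) (a b β : ℝ) (hab : b < a) (hb : 0 < b) (hβ : 0 < β)
    (ω : ℝ → ℝ) (hω : ∀ t : ℝ, ω t = (a - b) * Real.exp (-β * t) + b)
    (ψ : EuclideanSpace ℝ (Fin m) → ℝ)
    (hψ : ∀ z : EuclideanSpace ℝ (Fin m), ψ z = ∫ t in (0 : ℝ)..‖z‖, ω t) :
    LipschitzWith (Real.toNNReal a) ψ ∧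
      ∀ z₁ z₂ : EuclideanSpace ℝ (Fin m),
        clarkeDeriv ψ z₁ (z₂ - z₁) + clarkeDeriv ψ z₂ (z₁ - z₂)
          ≤ β * (a - b) * ‖z₁ - z₂‖ ^ 2 := by
  obtain rfl : ψ = radialPotential ω := funext hψ
  obtain rfl : ω = fun t => (a - b) * Real.exp (-β * t) + b := funext hω
  have hcont : Continuous fun t => (a - b) * Real.exp (-β * t) + b := by fun_prop
  have hpos : ∀ t, 0 ≤ (a - b) * Real.exp (-β * t) + b := fun t =>
    add_nonneg (mul_nonneg (sub_nonneg.2 hab.le) (Real.exp_pos _).le) hb.le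
  have hle : ∀ t, 0 ≤ t → (a - b) * Real.exp (-β * t) + b ≤ a := fun t ht => by
    have : Real.exp (-β * t) ≤ 1 := Real.exp_le_one_iff.2 (by nlinarith)
    nlinarith
  refine ⟨lipschitzWith_radialPotential hcont fun t ht => ?_, fun z₁ z₂ => ?_⟩
  · rw [abs_of_nonneg (hpos t), Real.coe_toNNReal _ (hb.trans hab).le]
    exact hle t ht
  · have h := clarkeDeriv_radialPotential_add_le hcont (fun t _ => hpos t)
      (fun t ht => by simpa using hle t ht)
      (lipschitzOnWith_mul_exp_neg_add (sub_nonneg.2 hab.le) hβ.le b) z₁ z₂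
    rwa [Real.coe_toNNReal _ (mul_nonneg hβ.le (sub_nonneg.2 hab.le))] at h
end

section
/- Let ψ : ℝ^m → ℝ be locally Lipschitz with |η| ≤ c_ψ(1+|z|) for all η ∈ ∂ψ(z), and let Δ be a measure space with γ : V → L²(Δ)^m a bounded linear map satisfying ∫_Δ |γv|² ≤ c_Δ²‖v‖_V². Define Ψ(v) = ∫_Δ ψ(γv). If additionally ψ⁰(z₁;z₂−z₁) + ψ⁰(z₂;z₁−z₂) ≤ α_ψ|z₁−z₂|² for all z₁, z₂ ∈ ℝ^m, then Ψ⁰(v₁;v₂−v₁) + Ψ⁰(v₂;v₁−v₂) ≤ α_ψ c_Δ²‖v₁−v₂‖_V² for all v₁, v₂ ∈ V, using the inequality Ψ⁰(u;v) ≤ ∫_Δ ψ⁰(γu; γv). -/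
open Filter MeasureTheory

/-- The Clarke generalized subdifferential of `ψ` at `u`. -/
def clarkeSubdiff {V : Type*} [NormedAddCommGroup V] [NormedSpace ℝ V]
    (ψ : V → ℝ) (u : V) : Set (V →L[ℝ] ℝ) :=
  {η | ∀ v : V, η v ≤ clarkeDeriv ψ u v}

/-- If `ψ : ℝ^m → ℝ` is locally Lipschitz with subgradient growth `|η| ≤ c_ψ(1+|z|)` and
satisfies `ψ⁰(z₁;z₂−z₁) + ψ⁰(z₂;z₁−z₂) ≤ α_ψ|z₁−z₂|²`, `γ : V → L²(Δ)^m` is linear with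
`∫ |γv|² ≤ c_Δ²‖v‖²`, and `Ψ(v) = ∫ ψ(γv)` satisfies the Aubin–Clarke inequality
`Ψ⁰(u;v) ≤ ∫ ψ⁰(γu;γv)`, then
`Ψ⁰(v₁;v₂−v₁) + Ψ⁰(v₂;v₁−v₂) ≤ α_ψ c_Δ²‖v₁−v₂‖²` for all `v₁, v₂ ∈ V`. -/
theorem integral_functional_relaxed_monotonicity
    {V : Type*} [NormedAddCommGroup V] [InnerProductSpace ℝ V] [CompleteSpace V]
    {Δ : Type*} [MeasurableSpace Δ] (μ : Measure Δ)
    (m : ℕ) (ψ : EuclideanSpace ℝ (Fin m) → ℝ) (hψ_lip : LocallyLipschitz ψ)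
    (c_ψ : ℝ) (hcψ : 0 ≤ c_ψ)
    (hψ_growth : ∀ (z : EuclideanSpace ℝ (Fin m)), ∀ η ∈ clarkeSubdiff ψ z,
      ‖η‖ ≤ c_ψ * (1 + ‖z‖))
    (α_ψ : ℝ) (hαψ : 0 ≤ α_ψ)
    (hψ0 : ∀ z₁ z₂ : EuclideanSpace ℝ (Fin m),
      clarkeDeriv ψ z₁ (z₂ - z₁) + clarkeDeriv ψ z₂ (z₁ - z₂) ≤ α_ψ * ‖z₁ - z₂‖ ^ 2)
    (γ : V →ₗ[ℝ] (Δ → EuclideanSpace ℝ (Fin m)))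
    (c_Δ : ℝ) (hcΔ : 0 ≤ c_Δ)
    (hγ_int : ∀ v : V, Integrable (fun x => ‖γ v x‖ ^ 2) μ)
    (hγ_bound : ∀ v : V, ∫ x, ‖γ v x‖ ^ 2 ∂μ ≤ c_Δ ^ 2 * ‖v‖ ^ 2)
    (Ψ : V → ℝ) (hΨdef : ∀ v : V, Ψ v = ∫ x, ψ (γ v x) ∂μ)
    (hint : ∀ u v : V, Integrable (fun x => clarkeDeriv ψ (γ u x) (γ v x)) μ)
    (hAubin : ∀ u v : V, clarkeDeriv Ψ u v ≤ ∫ x, clarkeDeriv ψ (γ u x) (γ v x) ∂μ) :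
    ∀ v₁ v₂ : V,
      clarkeDeriv Ψ v₁ (v₂ - v₁) + clarkeDeriv Ψ v₂ (v₁ - v₂)
        ≤ α_ψ * c_Δ ^ 2 * ‖v₁ - v₂‖ ^ 2 := by
  intro v₁ v₂
  have h1 := hAubin v₁ (v₂ - v₁)
  have h2 := hAubin v₂ (v₁ - v₂)
  have hi1 := hint v₁ (v₂ - v₁)
  have hi2 := hint v₂ (v₁ - v₂)
  have hsum : (∫ x, clarkeDeriv ψ (γ v₁ x) (γ (v₂ - v₁) x) ∂μ) +
      (∫ x, clarkeDeriv ψ (γ v₂ x) (γ (v₁ - v₂) x) ∂μ)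
      ≤ α_ψ * c_Δ ^ 2 * ‖v₁ - v₂‖ ^ 2 := by
    rw [← integral_add hi1 hi2]
    have hle : ∫ x, (clarkeDeriv ψ (γ v₁ x) (γ (v₂ - v₁) x) +
        clarkeDeriv ψ (γ v₂ x) (γ (v₁ - v₂) x)) ∂μ
        ≤ ∫ x, α_ψ * ‖γ (v₁ - v₂) x‖ ^ 2 ∂μ := by
      apply integral_mono (hi1.add hi2) ((hγ_int (v₁ - v₂)).const_mul α_ψ)
      intro x
      have e1 : γ (v₂ - v₁) x = γ v₂ x - γ v₁ x := by rw [map_sub]; rfl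
      have e2 : γ (v₁ - v₂) x = γ v₁ x - γ v₂ x := by rw [map_sub]; rfl
      have := hψ0 (γ v₁ x) (γ v₂ x)
      simp only [Pi.add_apply, e1, e2]
      exact this
    refine hle.trans ?_
    rw [integral_const_mul]
    have := hγ_bound (v₁ - v₂)
    calc α_ψ * ∫ x, ‖γ (v₁ - v₂) x‖ ^ 2 ∂μ ≤ α_ψ * (c_Δ ^ 2 * ‖v₁ - v₂‖ ^ 2) :=
          mul_le_mul_of_nonneg_left this hαψ
      _ = α_ψ * c_Δ ^ 2 * ‖v₁ - v₂‖ ^ 2 := by ring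
  linarith
end
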